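/- arXiv:2005.10217 — 7 statements merged into one kernel-verified Lean document; each statement's English description precedes it below -/
import Mathlib

section
/- Let 0 < D_m < D_n and N > 0. Then D_m·(e^(N/D_m) - 1) ≥ D_n·(e^(N/D_n) - 1). (Pure NOMA consumes at least as much energy as the hybrid NOMA solution with equal powers.) -/
/-! Both sides are values of the perspective `D ↦ D * f (N / D)` of the convex function
`f = exp - 1`. Because `f 0 = 0`, writing `N / b = (a / b) * (N / a) + (1 - a / b) * 0` for
`0 < a ≤ b` and applying convexity shows that this perspective is antitone in `D`. -/

open Set

theorem ConvexOn.mul_apply_div_le {s : Set ℝ} {f : ℝ → ℝ} (hf : ConvexOn ℝ s f) (h0 : 0 ∈ s)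
    (hf0 : f 0 ≤ 0) {N a b : ℝ} (ha : 0 < a) (hab : a ≤ b) (hNa : N / a ∈ s) :
    b * f (N / b) ≤ a * f (N / a) := by
  have hb : 0 < b := ha.trans_le hab
  have hcomb : (a / b) • (N / a) + (1 - a / b) • (0 : ℝ) = N / b := by
    simp only [smul_eq_mul, mul_zero, add_zero]
    field_simp
  have hconv := hf.2 hNa h0 (div_pos ha hb).le (sub_nonneg.2 ((div_le_one hb).2 hab))
    (add_sub_cancel _ _)
  rw [hcomb, smul_eq_mul, smul_eq_mul] at hconv
  calc b * f (N / b) ≤ b * (a / b * f (N / a) + (1 - a / b) * f 0) :=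
        mul_le_mul_of_nonneg_left hconv hb.le
    _ = a * f (N / a) + (b - a) * f 0 := by field_simp
    _ ≤ a * f (N / a) := by linarith [mul_nonpos_of_nonneg_of_nonpos (sub_nonneg.2 hab) hf0]

theorem stmt_4_general (Dm Dn N : ℝ) (hDm : 0 < Dm) (hDmn : Dm < Dn) :
    Dn * (Real.exp (N / Dn) - 1) ≤ Dm * (Real.exp (N / Dm) - 1) :=
  (convexOn_exp.add_const (-1)).mul_apply_div_le (f := fun t => Real.exp t - 1) (mem_univ 0)
    (by simp) hDm hDmn.le (mem_univ _)

theorem stmt_4 (Dm Dn N : ℝ) (hDm : 0 < Dm) (hDmn : Dm < Dn) (hN : 0 < N) :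
    Dn * (Real.exp (N / Dn) - 1) ≤ Dm * (Real.exp (N / Dm) - 1) :=
  stmt_4_general Dm Dn N hDm hDmn
end

section
/- Let 0 < D_m < D_n and N > 0. The function φ(x) = D_n·e^(N/D_n)·x^(D_m/(D_n - D_m)) - D_m·x^(D_n/(D_n - D_m)) is monotonically decreasing on the interval [e^(N/D_n), e^(N/D_m)]. -/
/-! With `p = Dm / (Dn - Dm)` and `E = exp (N / Dn)` the function is
`(Dn - Dm) * ((p + 1) * E * x ^ p - p * x ^ (p + 1))`, whose derivative
`(Dn - Dm) * p * (p + 1) * x ^ (p - 1) * (E - x)` is nonpositive for `x ≥ E`.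
So it decreases on all of `[E, ∞)`. -/

open Real Set

theorem hasDerivAt_mul_rpow_sub_mul_rpow_add_one {p E x : ℝ} (hx : 0 < x) :
    HasDerivAt (fun x : ℝ => (p + 1) * E * x ^ p - p * x ^ (p + 1))
      (p * (p + 1) * x ^ (p - 1) * (E - x)) x := by
  refine (((hasDerivAt_rpow_const (Or.inl hx.ne')).const_mul ((p + 1) * E)).sub
    ((hasDerivAt_rpow_const (Or.inl hx.ne')).const_mul p)).congr_deriv ?_
  rw [add_sub_cancel_right, ← sub_add_cancel p 1, rpow_add_one hx.ne', sub_add_cancel]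
  ring

theorem antitoneOn_mul_rpow_sub_mul_rpow_add_one {p E : ℝ} (hp : 0 ≤ p) (hE : 0 < E) :
    AntitoneOn (fun x : ℝ => (p + 1) * E * x ^ p - p * x ^ (p + 1)) (Ici E) := by
  have hpos : ∀ x ∈ Ici E, 0 < x := fun x hx => hE.trans_le hx
  refine antitoneOn_of_hasDerivWithinAt_nonpos (convex_Ici E)
    (fun x hx => (hasDerivAt_mul_rpow_sub_mul_rpow_add_one (hpos x hx)).continuousAt
      |>.continuousWithinAt)
    (fun x hx => (hasDerivAt_mul_rpow_sub_mul_rpow_add_one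
      (hpos x (interior_subset hx))).hasDerivWithinAt) ?_
  rw [interior_Ici]
  intro x hx
  have hcoeff : 0 ≤ p * (p + 1) * x ^ (p - 1) := by
    have := rpow_pos_of_pos (hE.trans hx) (p - 1)
    positivity
  exact mul_nonpos_of_nonneg_of_nonpos hcoeff (sub_nonpos.mpr hx.le)

theorem stmt_5_general (Dm Dn N : ℝ) (hDm : 0 < Dm) (hDmn : Dm < Dn) :
    AntitoneOn
      (fun x : ℝ => Dn * Real.exp (N / Dn) * x ^ (Dm / (Dn - Dm))
        - Dm * x ^ (Dn / (Dn - Dm)))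
      (Set.Icc (Real.exp (N / Dn)) (Real.exp (N / Dm))) := by
  have hd : 0 < Dn - Dm := sub_pos.mpr hDmn
  obtain ⟨p, hp⟩ : ∃ p, Dm / (Dn - Dm) = p := ⟨_, rfl⟩
  have hp0 : 0 ≤ p := hp ▸ div_nonneg hDm.le hd.le
  have hDm_eq : (Dn - Dm) * p = Dm := by rw [← hp]; field_simp
  have hDn_eq : (Dn - Dm) * (p + 1) = Dn := by linear_combination hDm_eq
  have hDn : Dn / (Dn - Dm) = p + 1 := (div_eq_iff hd.ne').2 (by linear_combination -hDn_eq)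
  have hφ : (fun x : ℝ => Dn * exp (N / Dn) * x ^ p - Dm * x ^ (Dn / (Dn - Dm))) =
      fun x => (Dn - Dm) * ((p + 1) * exp (N / Dn) * x ^ p - p * x ^ (p + 1)) := by
    funext x
    rw [hDn]
    linear_combination x ^ (p + 1) * hDm_eq - (exp (N / Dn) * x ^ p) * hDn_eq
  rw [hp, hφ]
  exact ((monotone_mul_left_of_nonneg hd.le).comp_antitoneOn
    (antitoneOn_mul_rpow_sub_mul_rpow_add_one hp0 (exp_pos _))).mono Icc_subset_Ici_self

theorem stmt_5 (Dm Dn N : ℝ) (hDm : 0 < Dm) (hDmn : Dm < Dn) (hN : 0 < N) :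
    AntitoneOn
      (fun x : ℝ => Dn * Real.exp (N / Dn) * x ^ (Dm / (Dn - Dm))
        - Dm * x ^ (Dn / (Dn - Dm)))
      (Set.Icc (Real.exp (N / Dn)) (Real.exp (N / Dm))) :=
  stmt_5_general Dm Dn N hDm hDmn
end

section
/- Let 0 < D_m < D_n, N > 0, and let x satisfy e^(N/D_n) ≤ x ≤ e^(N/D_m). Then D_n·e^(N/D_n)·x^(D_m/(D_n-D_m)) - D_m·x^(D_n/(D_n-D_m)) ≤ (D_n - D_m)·e^(N/(D_n-D_m)). -/
/-! The substitution `a = exp (N / Dn)`, `p = Dn / (Dn - Dm)` turns the inequality into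
`p a x^(p-1) - (p-1) x^p ≤ a^p`, i.e. the graph of the convex function `t ↦ t^p` (`p ≥ 1`) lies
above its tangent line at `x`; this is Bernoulli's inequality applied to `a / x`. -/

open Real

theorem Real.mul_mul_rpow_sub_one_sub_le_rpow {p x a : ℝ} (hp : 1 ≤ p) (hx : 0 < x) (ha : 0 ≤ a) :
    p * a * x ^ (p - 1) - (p - 1) * x ^ p ≤ a ^ p := by
  have bernoulli : 1 + p * (a / x - 1) ≤ (a / x) ^ p := by
    simpa using one_add_mul_self_le_rpow_one_add (s := a / x - 1)
      (by linarith [div_nonneg ha hx.le]) hp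
  calc p * a * x ^ (p - 1) - (p - 1) * x ^ p
      = x ^ p * (1 + p * (a / x - 1)) := by
        rw [rpow_sub_one hx.ne']
        field_simp
        ring
    _ ≤ x ^ p * (a / x) ^ p := by gcongr
    _ = a ^ p := by rw [← mul_rpow hx.le (div_nonneg ha hx.le), mul_div_cancel₀ a hx.ne']

theorem stmt_6_general (Dm Dn N x : ℝ) (hDm : 0 < Dm) (hDmn : Dm < Dn)
    (hx1 : Real.exp (N / Dn) ≤ x) :
    Dn * Real.exp (N / Dn) * x ^ (Dm / (Dn - Dm)) - Dm * x ^ (Dn / (Dn - Dm))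
      ≤ (Dn - Dm) * Real.exp (N / (Dn - Dm)) := by
  have hd : 0 < Dn - Dm := sub_pos.mpr hDmn
  have hp : 1 ≤ Dn / (Dn - Dm) := (one_le_div hd).mpr (by linarith)
  have hp_sub_one : Dn / (Dn - Dm) - 1 = Dm / (Dn - Dm) := by field_simp; ring
  have hexp : exp (N / (Dn - Dm)) = exp (N / Dn) ^ (Dn / (Dn - Dm)) := by
    rw [← exp_mul]
    congr 1
    field_simp [(hDm.trans hDmn).ne']
  have tangent := Real.mul_mul_rpow_sub_one_sub_le_rpow hp
    ((exp_pos _).trans_le hx1) (exp_pos (N / Dn)).le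
  rw [hp_sub_one, ← hexp] at tangent
  calc Dn * exp (N / Dn) * x ^ (Dm / (Dn - Dm)) - Dm * x ^ (Dn / (Dn - Dm))
      = (Dn - Dm) * (Dn / (Dn - Dm) * exp (N / Dn) * x ^ (Dm / (Dn - Dm))
          - Dm / (Dn - Dm) * x ^ (Dn / (Dn - Dm))) := by
        field_simp
    _ ≤ (Dn - Dm) * exp (N / (Dn - Dm)) := by gcongr

theorem stmt_6 (Dm Dn N x : ℝ) (hDm : 0 < Dm) (hDmn : Dm < Dn) (hN : 0 < N)
    (hx1 : Real.exp (N / Dn) ≤ x) (hx2 : x ≤ Real.exp (N / Dm)) :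
    Dn * Real.exp (N / Dn) * x ^ (Dm / (Dn - Dm)) - Dm * x ^ (Dn / (Dn - Dm))
      ≤ (Dn - Dm) * Real.exp (N / (Dn - Dm)) :=
  stmt_6_general Dm Dn N x hDm hDmn hx1
end

section
/- Let 0 < D_m < D_n and N > 0, and suppose P satisfies e^(N/D_n)·(e^(N/D_m) - 1) ≤ P ≤ e^(N/(D_n-D_m)) - 1. Then -D_m·P + D_n·e^(N/D_n)·(1+P)^(D_m/D_n) ≥ D_n·e^(N/D_n). -/
/-!
Write `a = Dm / Dn`, `t = N / (Dn - Dm)` and `c = exp (N / Dn) = exp ((1 - a) t)`; the claim is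
`c + a P ≤ c (1 + P) ^ a`. Its right-hand side minus its left-hand side is concave in `P` and
vanishes at `P = 0`, so it suffices to check it at the right endpoint `P = exp t - 1`, where
`c (1 + P) ^ a = exp t` and it becomes the convexity bound `exp ((1 - a) t) ≤ (1 - a) exp t + a`.
-/

open Real Set

lemma one_add_div_mul_rpow_sub_one_le {a P Q : ℝ} (ha₀ : 0 ≤ a) (ha₁ : a ≤ 1) (hP : 0 ≤ P)
    (hPQ : P ≤ Q) (hQ : 0 < Q) :
    1 + P / Q * ((1 + Q) ^ a - 1) ≤ (1 + P) ^ a := by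
  have hw₀ : 0 ≤ P / Q := div_nonneg hP hQ.le
  have hw₁ : 1 - P / Q + P / Q = 1 := by ring
  have hconc := (concaveOn_rpow ha₀ ha₁).2 (mem_Ici.2 zero_le_one)
    (mem_Ici.2 (by linarith : (0 : ℝ) ≤ 1 + Q))
    (sub_nonneg.2 ((div_le_one hQ).2 hPQ)) hw₀ hw₁
  have hpoint : (1 - P / Q) * 1 + P / Q * (1 + Q) = 1 + P := by
    field_simp
    ring
  simp only [one_rpow, smul_eq_mul, hpoint] at hconc
  linarith

lemma add_mul_le_mul_one_add_rpow_of_le {a c P Q : ℝ} (ha₀ : 0 ≤ a) (ha₁ : a ≤ 1) (hc : 0 ≤ c)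
    (hP : 0 ≤ P) (hPQ : P ≤ Q) (hQ : c + a * Q ≤ c * (1 + Q) ^ a) :
    c + a * P ≤ c * (1 + P) ^ a := by
  rcases hP.eq_or_lt with rfl | hP'
  · simp
  have hQ₀ : 0 < Q := hP'.trans_le hPQ
  calc c + a * P = c + P / Q * (a * Q) := by field_simp
    _ ≤ c + P / Q * (c * ((1 + Q) ^ a - 1)) := by
      have : a * Q ≤ c * ((1 + Q) ^ a - 1) := by linarith
      gcongr
    _ = c * (1 + P / Q * ((1 + Q) ^ a - 1)) := by ring
    _ ≤ c * (1 + P) ^ a := by gcongr; exact one_add_div_mul_rpow_sub_one_le ha₀ ha₁ hP hPQ hQ₀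

lemma exp_one_sub_mul_le {a : ℝ} (ha₀ : 0 ≤ a) (ha₁ : a ≤ 1) (t : ℝ) :
    exp ((1 - a) * t) ≤ (1 - a) * exp t + a := by
  simpa using convexOn_exp.2 (mem_univ t) (mem_univ 0) (sub_nonneg.2 ha₁) ha₀ (by ring)

lemma exp_one_sub_mul_add_mul_le {a : ℝ} (ha₀ : 0 ≤ a) (ha₁ : a ≤ 1) (t : ℝ) :
    exp ((1 - a) * t) + a * (exp t - 1)
      ≤ exp ((1 - a) * t) * (1 + (exp t - 1)) ^ a := by
  rw [add_sub_cancel, ← exp_mul, ← exp_add]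
  have := exp_one_sub_mul_le ha₀ ha₁ t
  ring_nf at this ⊢
  linarith

theorem stmt_10 (Dm Dn N P : ℝ) (hDm : 0 < Dm) (hDmn : Dm < Dn) (hN : 0 < N)
    (hP1 : Real.exp (N / Dn) * (Real.exp (N / Dm) - 1) ≤ P)
    (hP2 : P ≤ Real.exp (N / (Dn - Dm)) - 1) :
    Dn * Real.exp (N / Dn)
      ≤ -Dm * P + Dn * Real.exp (N / Dn) * (1 + P) ^ (Dm / Dn) := by
  have hDn : 0 < Dn := hDm.trans hDmn
  have hP : 0 ≤ P := le_trans (mul_nonneg (exp_pos _).le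
    (sub_nonneg.2 (one_le_exp (div_pos hN hDm).le))) hP1
  have ha₀ : 0 ≤ Dm / Dn := (div_pos hDm hDn).le
  have ha₁ : Dm / Dn ≤ 1 := (div_le_one hDn).2 hDmn.le
  have hexp : N / Dn = (1 - Dm / Dn) * (N / (Dn - Dm)) := by
    field_simp [(sub_pos.2 hDmn).ne']
  have key := add_mul_le_mul_one_add_rpow_of_le ha₀ ha₁ (exp_pos (N / Dn)).le hP hP2
    (by rw [hexp]; exact exp_one_sub_mul_add_mul_le ha₀ ha₁ _)
  have hDm_eq : Dn * (Dm / Dn) = Dm := by field_simp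
  have hscaled := mul_le_mul_of_nonneg_left key hDn.le
  rw [mul_add, ← mul_assoc, hDm_eq, ← mul_assoc] at hscaled
  linarith
end

section
/- Let 0 < D_m < D_n and N > 0. The function φ(y) = D_m·(y - 1) + (D_n - D_m)·e^(N/(D_n-D_m))·(y^(-D_m/(D_n-D_m)) - 1) is monotonically decreasing on [1, e^(N/D_n)]. -/
open Real

/-! The derivative of `φ` is `D_m (1 - e^{N/(D_n-D_m)} y^{-D_n/(D_n-D_m)})`, which is nonpositive
exactly when `y^{D_n/(D_n-D_m)} ≤ e^{N/(D_n-D_m)}`, i.e. when `y ≤ e^{N/D_n}`. -/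

lemma hasDerivAt_phi {Dm Dn x : ℝ} (K : ℝ) (hmn : Dm ≠ Dn) (hx : 0 < x) :
    HasDerivAt (fun y : ℝ => Dm * (y - 1) + (Dn - Dm) * K * (y ^ (-(Dm / (Dn - Dm))) - 1))
      (Dm * (1 - K * x ^ (-(Dn / (Dn - Dm))))) x := by
  have hsub : Dn - Dm ≠ 0 := sub_ne_zero.mpr hmn.symm
  have hexp : -(Dm / (Dn - Dm)) - 1 = -(Dn / (Dn - Dm)) := by field_simp; ring
  refine ((((hasDerivAt_id x).sub_const 1).const_mul Dm).add
    (((hasDerivAt_rpow_const (p := -(Dm / (Dn - Dm))) (Or.inl hx.ne')).sub_const 1).const_mul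
      ((Dn - Dm) * K))).congr_deriv ?_
  rw [hexp]
  field_simp
  ring

lemma rpow_le_exp_mul_of_le_exp {x u r : ℝ} (hx : 0 ≤ x) (hxu : x ≤ exp u) (hr : 0 ≤ r) :
    x ^ r ≤ exp (u * r) := by
  rw [exp_mul]
  exact rpow_le_rpow hx hxu hr

lemma one_le_mul_rpow_neg_of_rpow_le {x r K : ℝ} (hx : 0 < x) (h : x ^ r ≤ K) :
    1 ≤ K * x ^ (-r) := by
  rwa [rpow_neg hx.le, ← div_eq_mul_inv, one_le_div (rpow_pos_of_pos hx r)]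

theorem stmt_11_general (Dm Dn N : ℝ) (hDm : 0 < Dm) (hDmn : Dm < Dn) :
    AntitoneOn
      (fun y : ℝ => Dm * (y - 1)
        + (Dn - Dm) * Real.exp (N / (Dn - Dm)) * (y ^ (-(Dm / (Dn - Dm))) - 1))
      (Set.Icc 1 (Real.exp (N / Dn))) := by
  have hDn : Dn ≠ 0 := (hDm.trans hDmn).ne'
  have hderiv (x : ℝ) (hx : 1 ≤ x) := hasDerivAt_phi (exp (N / (Dn - Dm))) hDmn.ne (by linarith)
  refine antitoneOn_of_hasDerivWithinAt_nonpos (convex_Icc _ _)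
    (fun x hx => (hderiv x hx.1).continuousAt.continuousWithinAt)
    (fun x hx => (hderiv x (interior_subset hx).1).hasDerivWithinAt) (fun x hx => ?_)
  rw [interior_Icc] at hx
  have hx0 : 0 < x := by linarith [hx.1]
  have hpow : x ^ (Dn / (Dn - Dm)) ≤ exp (N / (Dn - Dm)) :=
    calc x ^ (Dn / (Dn - Dm)) ≤ exp (N / Dn * (Dn / (Dn - Dm))) :=
          rpow_le_exp_mul_of_le_exp hx0.le hx.2.le (div_nonneg (by linarith) (by linarith))
      _ = exp (N / (Dn - Dm)) := by congr 1; field_simp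
  have := one_le_mul_rpow_neg_of_rpow_le hx0 hpow
  exact mul_nonpos_of_nonneg_of_nonpos hDm.le (by linarith)

theorem stmt_11 (Dm Dn N : ℝ) (hDm : 0 < Dm) (hDmn : Dm < Dn) (hN : 0 < N) :
    AntitoneOn
      (fun y : ℝ => Dm * (y - 1)
        + (Dn - Dm) * Real.exp (N / (Dn - Dm)) * (y ^ (-(Dm / (Dn - Dm))) - 1))
      (Set.Icc 1 (Real.exp (N / Dn))) :=
  stmt_11_general Dm Dn N hDm hDmn
end

section
/- Let 0 < D_m < D_n, N > 0, and let y satisfy 1 ≤ y ≤ e^(N/D_n). Then D_m·(y - 1) + (D_n - D_m)·e^(N/(D_n-D_m))·(y^(-D_m/(D_n-D_m)) - 1) ≤ 0. -/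
/-!
Put `d = Dn - Dm` and `a = Dm / d`, so that `a + 1 = Dn / d` and the hypothesis `y ≤ exp (N / Dn)`
becomes `y ^ (a + 1) ≤ exp (N / d)`. Bernoulli's inequality `y ^ (a + 1) ≥ 1 + (a + 1) (y - 1)` gives
`a (y - 1) ≤ y ^ (a + 1) (1 - y ^ (-a))`; multiplying by `d` and enlarging `y ^ (a + 1)` to
`exp (N / d)` yields `Dm (y - 1) ≤ d exp (N / d) (1 - y ^ (-a))`.
-/

open Real

lemma mul_sub_one_le_rpow_add_one_mul_one_sub_rpow_neg {y a : ℝ} (hy : 1 ≤ y) (ha : 0 ≤ a) :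
    a * (y - 1) ≤ y ^ (a + 1) * (1 - y ^ (-a)) := by
  have hy0 : 0 < y := zero_lt_one.trans_le hy
  have hcancel : y ^ (a + 1) * y ^ (-a) = y := by
    rw [← rpow_add hy0, add_neg_cancel_comm, rpow_one]
  have hbernoulli : 1 + (a + 1) * (y - 1) ≤ y ^ (a + 1) := by
    simpa using one_add_mul_self_le_rpow_one_add (s := y - 1) (by linarith) (by linarith)
  rw [mul_one_sub, hcancel]
  linarith

lemma rpow_le_exp_mul_of_le_exp_s12 {x y p : ℝ} (hy : 0 ≤ y) (hyx : y ≤ exp x) (hp : 0 ≤ p) :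
    y ^ p ≤ exp (x * p) := by
  rw [exp_mul]
  exact rpow_le_rpow hy hyx hp

theorem stmt_12_general (Dm Dn N y : ℝ) (hDm : 0 < Dm) (hDmn : Dm < Dn)
    (hy1 : 1 ≤ y) (hy2 : y ≤ Real.exp (N / Dn)) :
    Dm * (y - 1)
      + (Dn - Dm) * Real.exp (N / (Dn - Dm)) * (y ^ (-(Dm / (Dn - Dm))) - 1)
      ≤ 0 := by
  set d := Dn - Dm
  set a := Dm / d
  have hd : 0 < d := sub_pos.mpr hDmn
  have ha : 0 < a := div_pos hDm hd
  have hDn : 0 < Dn := hDm.trans hDmn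
  have hexp : y ^ (a + 1) ≤ exp (N / d) := by
    have hp : a + 1 = Dn / d := by
      rw [eq_div_iff hd.ne', add_mul, div_mul_cancel₀ _ hd.ne', one_mul]
      exact add_sub_cancel Dm Dn
    rw [hp, show N / d = N / Dn * (Dn / d) by field_simp]
    exact rpow_le_exp_mul_of_le_exp_s12 (by linarith) hy2 (by positivity)
  have hdecay : 0 ≤ 1 - y ^ (-a) :=
    sub_nonneg.mpr (rpow_le_one_of_one_le_of_nonpos hy1 (neg_nonpos.mpr ha.le))
  have key : Dm * (y - 1) ≤ d * exp (N / d) * (1 - y ^ (-a)) :=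
    calc Dm * (y - 1) = d * (a * (y - 1)) := by rw [← mul_assoc, mul_div_cancel₀ _ hd.ne']
      _ ≤ d * (y ^ (a + 1) * (1 - y ^ (-a))) := by
        gcongr d * ?_
        exact mul_sub_one_le_rpow_add_one_mul_one_sub_rpow_neg hy1 ha.le
      _ ≤ d * exp (N / d) * (1 - y ^ (-a)) := by rw [mul_assoc]; gcongr
  rw [← neg_sub 1 (y ^ (-a)), mul_neg]
  linarith

theorem stmt_12 (Dm Dn N y : ℝ) (hDm : 0 < Dm) (hDmn : Dm < Dn) (hN : 0 < N)
    (hy1 : 1 ≤ y) (hy2 : y ≤ Real.exp (N / Dn)) :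
    Dm * (y - 1)
      + (Dn - Dm) * Real.exp (N / (Dn - Dm)) * (y ^ (-(Dm / (Dn - Dm))) - 1)
      ≤ 0 :=
  stmt_12_general Dm Dn N y hDm hDmn hy1 hy2
end

section
/- Let 0 < D_m < D_n and N > 0. If e^(N/D_n)·(e^(N/D_m) - 1) ≤ e^(N/(D_n-D_m)) - 1 is the assumed condition of Lemma 2, then for every P in the interval [e^(N/D_n)·(e^(N/D_m) - 1), e^(N/(D_n-D_m)) - 1], the energy E₀(P) = D_m·(e^(N/D_n)·(1+P)^(D_m/D_n) - P - 1) + (D_n - D_m)·(e^(N/D_n)·(1+P)^(D_m/D_n) - 1) satisfies E₀(P) ≥ D_n·(e^(N/D_n) - 1). -/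
theorem stmt_17 (Dm Dn N : ℝ) (hDm : 0 < Dm) (hDmn : Dm < Dn) (hN : 0 < N)
    (hcond : Real.exp (N / Dn) * (Real.exp (N / Dm) - 1)
      ≤ Real.exp (N / (Dn - Dm)) - 1) :
    ∀ P : ℝ, Real.exp (N / Dn) * (Real.exp (N / Dm) - 1) ≤ P →
      P ≤ Real.exp (N / (Dn - Dm)) - 1 →
      Dn * (Real.exp (N / Dn) - 1)
        ≤ Dm * (Real.exp (N / Dn) * (1 + P) ^ (Dm / Dn) - P - 1)
          + (Dn - Dm) * (Real.exp (N / Dn) * (1 + P) ^ (Dm / Dn) - 1) := by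
  intro P hP1 hP2
  have hDn : 0 < Dn := hDm.trans hDmn
  have hd : 0 < Dn - Dm := by linarith
  set a : ℝ := Dm / Dn with ha
  have ha0 : 0 < a := div_pos hDm hDn
  have ha1 : a < 1 := (div_lt_one hDn).mpr hDmn
  set E : ℝ := Real.exp (N / Dn) with hE
  have hEpos : 0 < E := Real.exp_pos _
  have hexp : N / Dm + 1 ≤ Real.exp (N / Dm) := Real.add_one_le_exp _
  have hNDm : 0 < N / Dm := div_pos hN hDm
  have hP0 : 0 ≤ P := by nlinarith
  set x : ℝ := 1 + P with hx
  have hx1 : (1:ℝ) ≤ x := by linarith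
  have hx0 : (0:ℝ) < x := by linarith
  set B : ℝ := Real.exp (N / (Dn - Dm)) with hB
  have hxB : x ≤ B := by
    have := Real.exp_pos (N / (Dn - Dm))
    linarith
  -- Young / weighted AM-GM: x^(1-a) ≤ (1-a)*x + a
  have young : x ^ (1 - a) ≤ (1 - a) * x + a := by
    have h := Real.geom_mean_le_arith_mean2_weighted
      (by linarith : (0:ℝ) ≤ 1 - a) ha0.le (by linarith : (0:ℝ) ≤ x)
      (by norm_num : (0:ℝ) ≤ 1) (by ring)
    simpa [Real.one_rpow] using h
  -- x^(1-a) * x^a = x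
  have hsplit : x ^ (1 - a) * x ^ a = x := by
    rw [← Real.rpow_add hx0]
    norm_num
  -- x^(1-a) ≤ E
  have harg : N / (Dn - Dm) * (1 - a) = N / Dn := by
    rw [ha]; field_simp
  have hBE : B ^ (1 - a) = E := by
    rw [hB, hE, ← Real.exp_mul, harg]
  have hxE : x ^ (1 - a) ≤ E := by
    rw [← hBE]
    exact Real.rpow_le_rpow hx0.le hxB (by linarith)
  have hxa1 : (1:ℝ) ≤ x ^ a := Real.one_le_rpow hx1 ha0.le
  -- a * P ≤ x - x^(1-a) = x^(1-a) * (x^a - 1) ≤ E * (x^a - 1)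
  have key : a * P ≤ E * (x ^ a - 1) := by
    have h1 : a * P ≤ x - x ^ (1 - a) := by nlinarith
    have h2 : x - x ^ (1 - a) = x ^ (1 - a) * (x ^ a - 1) := by
      nlinarith [hsplit]
    have h3 : x ^ (1 - a) * (x ^ a - 1) ≤ E * (x ^ a - 1) := by nlinarith
    linarith
  have keyD : Dm * P ≤ Dn * E * x ^ a - Dn * E := by
    calc Dm * P = Dn * (a * P) := by rw [ha]; field_simp
      _ ≤ Dn * (E * (x ^ a - 1)) := mul_le_mul_of_nonneg_left key hDn.le
      _ = Dn * E * x ^ a - Dn * E := by ring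
  have expand : Dm * (E * x ^ a - P - 1) + (Dn - Dm) * (E * x ^ a - 1)
      = Dn * E * x ^ a - Dm * P - Dn := by ring
  have hgoal : Dn * (E - 1) = Dn * E - Dn := by ring
  linarith
end
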